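/- Let the Lagrangian be L(q,u) = ½∑_{i,j=1}^n g_{ij}(q) u_i u_j + ∑_{i=1}^n b_i(q) u_i + c(q) + U(q), with g_{ij} = g_{ji} C² and all coefficients independent of t, and suppose the constraint functions α_ν are independent of t and satisfy ᾱ_ν(q,v) = α_ν(q,v) for every ν and every (q,v). Then along every C² curve satisfying the constraints and solving the Voronec equations, the Jacobi-type quantity ½∑_{r,s=1}^m g_{rs}(q) q̇_r q̇_s + ½∑_{ν,μ=1}^k g_{m+ν,m+μ}(q) α_ν α_μ + ∑_{r=1}^m ∑_{ν=1}^k g_{r,m+ν}(q) q̇_r α_ν − U(q) − c(q) (with α_ν = α_ν(q(t),v(t))) is constant in t. -/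

import Mathlib

/-!
Along a constrained motion, differentiate `E* = ∑ v_r ∂L*/∂v_r − L*` and insert the Voronec
equations. Since `L*` and `α` do not depend on `t`, what is left is
`∑_ν (ᾱ_ν − α_ν) ∂L*/∂q_{m+ν} + ∑_ν ∂L/∂u_{m+ν} · ∑_r v_r B_rν`. The first sum vanishes by
`ᾱ = α`; so does the second, because differentiating the identity `ᾱ_ν = α_ν` along the motion
gives exactly `∑_r v_r B_rν = 0`. Hence `E*` is conserved.

For `L` quadratic in the velocities, `ᾱ = α` gives `∑_r v_r ∂L*/∂v_r = ∑_i û_i ∂L/∂u_i`, and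
Euler's identity `∑_i u_i ∂L/∂u_i = 2 T₂ + T₁` turns `E*` into `T₂(q, û) − c − U`, which is the
Jacobi quantity once `û = (v, α)` is split into its two blocks.
-/

open scoped BigOperators
noncomputable section
namespace NH

/-- The phase point `(q, v, t)` with `q : ℝⁿ` (n = m+k) and independent velocities `v : ℝᵐ`. -/
abbrev Pt (m k : ℕ) : Type := (Fin (m+k) → ℝ) × (Fin m → ℝ) × ℝ

/-- The full phase point `(q, u, t)` with all velocities `u : ℝⁿ`. -/
abbrev PtL (m k : ℕ) : Type := (Fin (m+k) → ℝ) × (Fin (m+k) → ℝ) × ℝ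

/-- Partial derivative of `f (q, w, t)` with respect to `q_i`. -/
def pq {n m' : ℕ} (f : (Fin n → ℝ) × (Fin m' → ℝ) × ℝ → ℝ) (i : Fin n)
    (x : (Fin n → ℝ) × (Fin m' → ℝ) × ℝ) : ℝ :=
  fderiv ℝ f x (Pi.single i 1, 0, 0)

/-- Partial derivative of `f (q, w, t)` with respect to the velocity variable `w_j`. -/
def pv {n m' : ℕ} (f : (Fin n → ℝ) × (Fin m' → ℝ) × ℝ → ℝ) (j : Fin m')
    (x : (Fin n → ℝ) × (Fin m' → ℝ) × ℝ) : ℝ :=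
  fderiv ℝ f x (0, Pi.single j 1, 0)

/-- Partial derivative of `f (q, w, t)` with respect to time `t`. -/
def pt {n m' : ℕ} (f : (Fin n → ℝ) × (Fin m' → ℝ) × ℝ → ℝ)
    (x : (Fin n → ℝ) × (Fin m' → ℝ) × ℝ) : ℝ :=
  fderiv ℝ f x (0, 0, 1)

/-- Partial derivative of `U (q, t)` with respect to `q_i`. -/
def pUq {n : ℕ} (U : (Fin n → ℝ) × ℝ → ℝ) (i : Fin n) (x : (Fin n → ℝ) × ℝ) : ℝ :=
  fderiv ℝ U x (Pi.single i 1, 0)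

/-- Partial derivative of `U (q, t)` with respect to `t`. -/
def pUt {n : ℕ} (U : (Fin n → ℝ) × ℝ → ℝ) (x : (Fin n → ℝ) × ℝ) : ℝ :=
  fderiv ℝ U x (0, 1)

variable {m k : ℕ}

/-- `û(q,v,t) = (v₁,…,vₘ, α₁(q,v,t),…,α_k(q,v,t))`. -/
def uhat (α : Fin k → Pt m k → ℝ) (x : Pt m k) : Fin (m+k) → ℝ :=
  Fin.append x.2.1 (fun ν => α ν x)

/-- The full phase point `(q, û(q,v,t), t)` associated to `(q,v,t)`. -/
def Lpt (α : Fin k → Pt m k → ℝ) (x : Pt m k) : PtL m k :=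
  (x.1, uhat α x, x.2.2)

/-- The restricted Lagrangian `L*(q,v,t) = L(q, û(q,v,t), t)`. -/
def Lstar (L : PtL m k → ℝ) (α : Fin k → Pt m k → ℝ) (x : Pt m k) : ℝ :=
  L (Lpt α x)

/-- `ᾱ_ν(q,v,t) = ∑_r v_r ∂α_ν/∂v_r`. -/
def abar (α : Fin k → Pt m k → ℝ) (ν : Fin k) (x : Pt m k) : ℝ :=
  ∑ r : Fin m, x.2.1 r * pv (α ν) r x

/-- The restricted energy `E*(q,v,t) = ∑_r v_r ∂L*/∂v_r − L*`. -/
def Estar (L : PtL m k → ℝ) (α : Fin k → Pt m k → ℝ) (x : Pt m k) : ℝ :=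
  ∑ r : Fin m, x.2.1 r * pv (Lstar L α) r x - Lstar L α x

/-- The energy `E(q,v,t) = ∑_i û_i (∂L/∂u_i)(q,û,t) − L*(q,v,t)`. -/
def En (L : PtL m k → ℝ) (α : Fin k → Pt m k → ℝ) (x : Pt m k) : ℝ :=
  ∑ i : Fin (m+k), uhat α x i * pv L i (Lpt α x) - Lstar L α x

/-- `q̇_i(t)`. -/
def qdot {n : ℕ} (q : ℝ → Fin n → ℝ) (t : ℝ) (i : Fin n) : ℝ :=
  deriv (fun s => q s i) t

/-- The independent velocities `v(t) = (q̇₁,…,q̇ₘ)` along a curve. -/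
def vel (m k : ℕ) (q : ℝ → Fin (m+k) → ℝ) (t : ℝ) (r : Fin m) : ℝ :=
  qdot q t (Fin.castAdd k r)

/-- The point `(q(t), v(t), t)` along a curve. -/
def along (m k : ℕ) (q : ℝ → Fin (m+k) → ℝ) (t : ℝ) : Pt m k :=
  (q t, vel m k q t, t)

/-- The curve satisfies the nonholonomic constraints: `q̇_{m+ν} = α_ν(q, v, t)`. -/
def Constrained (α : Fin k → Pt m k → ℝ) (q : ℝ → Fin (m+k) → ℝ) : Prop :=
  ∀ (t : ℝ) (ν : Fin k), qdot q t (Fin.natAdd m ν) = α ν (along m k q t)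

/-- The Voronec coefficients `B_rν(t)` along a constrained curve. -/
def Bco (α : Fin k → Pt m k → ℝ) (q : ℝ → Fin (m+k) → ℝ) (r : Fin m) (ν : Fin k) (t : ℝ) : ℝ :=
  deriv (fun s => pv (α ν) r (along m k q s)) t
    - pq (α ν) (Fin.castAdd k r) (along m k q t)
    - ∑ μ : Fin k, pv (α μ) r (along m k q t) * pq (α ν) (Fin.natAdd m μ) (along m k q t)

/-- The Voronec equations of motion along a constrained curve. -/
def Voronec (L : PtL m k → ℝ) (α : Fin k → Pt m k → ℝ) (q : ℝ → Fin (m+k) → ℝ) : Prop :=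
  ∀ (r : Fin m) (t : ℝ),
    deriv (fun s => pv (Lstar L α) r (along m k q s)) t
      - pq (Lstar L α) (Fin.castAdd k r) (along m k q t)
      - ∑ ν : Fin k, pq (Lstar L α) (Fin.natAdd m ν) (along m k q t) * pv (α ν) r (along m k q t)
      - ∑ ν : Fin k, Bco α q r ν t * pv L (Fin.natAdd m ν) (Lpt α (along m k q t)) = 0

section Partials

variable {n m' : ℕ}

def Autonomous (f : (Fin n → ℝ) × (Fin m' → ℝ) × ℝ → ℝ) : Prop :=
  ∀ (Q : Fin n → ℝ) (w : Fin m' → ℝ) (a a' : ℝ), f (Q, w, a) = f (Q, w, a')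

/-- `Estar L α` is `energy (Lstar L α)` and `abar α ν - α ν` is `energy (α ν)`, so one
computation of its derivative along a motion serves both. -/
def energy (f : (Fin n → ℝ) × (Fin m' → ℝ) × ℝ → ℝ)
    (x : (Fin n → ℝ) × (Fin m' → ℝ) × ℝ) : ℝ :=
  ∑ j, x.2.1 j * pv f j x - f x

theorem fderiv_apply_eq_sum (f : (Fin n → ℝ) × (Fin m' → ℝ) × ℝ → ℝ)
    (x : (Fin n → ℝ) × (Fin m' → ℝ) × ℝ) (a : Fin n → ℝ) (w : Fin m' → ℝ) (c : ℝ) :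
    fderiv ℝ f x (a, w, c) = ∑ i, a i * pq f i x + ∑ j, w j * pv f j x + c * pt f x := by
  have hsplit : ((a, w, c) : (Fin n → ℝ) × (Fin m' → ℝ) × ℝ)
      = (∑ i, a i • (Pi.single i 1, 0, 0)) + (∑ j, w j • (0, Pi.single j 1, 0))
        + c • (0, 0, 1) := by
    ext <;> simp [Prod.fst_sum, Prod.snd_sum, Finset.sum_apply, Pi.single_apply]
  simp only [hsplit, map_add, map_sum, map_smul, smul_eq_mul, pq, pv, pt]

theorem pt_eq_zero_of_autonomous {f : (Fin n → ℝ) × (Fin m' → ℝ) × ℝ → ℝ} (hf : Autonomous f)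
    (x : (Fin n → ℝ) × (Fin m' → ℝ) × ℝ) : pt f x = 0 := by
  by_cases hfx : DifferentiableAt ℝ f x
  · have hline : HasDerivAt (fun s : ℝ => (x.1, x.2.1, s)) (0, 0, 1) x.2.2 :=
      (hasDerivAt_const _ _).prodMk ((hasDerivAt_const _ _).prodMk (hasDerivAt_id _))
    have hcomp : HasDerivAt (fun s : ℝ => f (x.1, x.2.1, s)) (pt f x) x.2.2 :=
      hfx.hasFDerivAt.comp_hasDerivAt x.2.2 hline
    have hconst : (fun s : ℝ => f (x.1, x.2.1, s)) = fun _ => f x := funext fun s => hf _ _ _ _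
    rw [hconst] at hcomp
    exact hcomp.unique (hasDerivAt_const _ _)
  · simp [pt, fderiv_zero_of_not_differentiableAt hfx]

theorem contDiff_pv {f : (Fin n → ℝ) × (Fin m' → ℝ) × ℝ → ℝ} (hf : ContDiff ℝ 2 f) (j : Fin m') :
    ContDiff ℝ 1 (pv f j) :=
  (hf.fderiv_right le_rfl).clm_apply contDiff_const

-- Differentiating along this ray in the velocities applies the Euler operator `∑ v_j ∂/∂v_j`.
theorem hasDerivAt_smul_vel (x : (Fin n → ℝ) × (Fin m' → ℝ) × ℝ) :
    HasDerivAt (fun s : ℝ => (x.1, (1 + s) • x.2.1, x.2.2)) (0, x.2.1, 0) 0 := by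
  simpa using (hasDerivAt_const (0 : ℝ) x.1).prodMk
    ((((hasDerivAt_id (0 : ℝ)).const_add 1).smul_const x.2.1).prodMk
      (hasDerivAt_const (0 : ℝ) x.2.2))

end Partials

theorem sum_mul_sum_mul_comm {ι κ : Type*} [Fintype ι] [Fintype κ] (a : ι → ℝ) (b : ι → κ → ℝ)
    (c : κ → ℝ) : ∑ i, a i * ∑ j, b i j * c j = ∑ j, (∑ i, a i * b i j) * c j :=
  Matrix.dotProduct_mulVec a (Matrix.of b) c

section Curve

variable (α : Fin k → Pt m k → ℝ) {q : ℝ → Fin (m+k) → ℝ}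

theorem contDiff_vel (hq : ContDiff ℝ 2 q) (r : Fin m) :
    ContDiff ℝ 1 (fun s => vel m k q s r) :=
  (contDiff_succ_iff_deriv.mp (contDiff_pi.mp hq (Fin.castAdd k r))).2.2

theorem hasDerivAt_along (hq : ContDiff ℝ 2 q) (t : ℝ) :
    HasDerivAt (along m k q) (qdot q t, fun r => deriv (fun s => vel m k q s r) t, 1) t := by
  have hq' : HasDerivAt q (qdot q t) t := hasDerivAt_pi.mpr fun i =>
    ((contDiff_pi.mp hq i).differentiable two_ne_zero t).hasDerivAt
  have hvel : HasDerivAt (vel m k q) (fun r => deriv (fun s => vel m k q s r) t) t :=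
    hasDerivAt_pi.mpr fun r => ((contDiff_vel hq r).differentiable one_ne_zero t).hasDerivAt
  exact hq'.prodMk (hvel.prodMk (hasDerivAt_id t))

theorem hasDerivAt_comp_along {f : Pt m k → ℝ} {t : ℝ} (hf : DifferentiableAt ℝ f (along m k q t))
    (hfa : Autonomous f) (hq : ContDiff ℝ 2 q) (hcon : Constrained α q) :
    HasDerivAt (fun s => f (along m k q s))
      (∑ r, vel m k q t r * pq f (Fin.castAdd k r) (along m k q t)
        + ∑ ν, α ν (along m k q t) * pq f (Fin.natAdd m ν) (along m k q t)
        + ∑ r, deriv (fun s => vel m k q s r) t * pv f r (along m k q t)) t := by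
  have h := hf.hasFDerivAt.comp_hasDerivAt t (hasDerivAt_along hq t)
  rw [fderiv_apply_eq_sum, pt_eq_zero_of_autonomous hfa, mul_zero, add_zero, Fin.sum_univ_add] at h
  simp only [hcon t] at h
  exact h

theorem hasDerivAt_energy_along {f : Pt m k → ℝ} (hf : ContDiff ℝ 2 f) (hfa : Autonomous f)
    (hq : ContDiff ℝ 2 q) (hcon : Constrained α q) (t : ℝ) :
    HasDerivAt (fun s => energy f (along m k q s))
      (∑ r, vel m k q t r * (deriv (fun s => pv f r (along m k q s)) t
          - pq f (Fin.castAdd k r) (along m k q t))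
        - ∑ ν, α ν (along m k q t) * pq f (Fin.natAdd m ν) (along m k q t)) t := by
  have halong := (hasDerivAt_along hq t).differentiableAt
  have hvel : ∀ r, HasDerivAt (fun s => vel m k q s r) (deriv (fun s => vel m k q s r) t) t :=
    fun r => ((contDiff_vel hq r).differentiable one_ne_zero t).hasDerivAt
  have hpv : ∀ r, HasDerivAt (fun s => pv f r (along m k q s))
      (deriv (fun s => pv f r (along m k q s)) t) t :=
    fun r => (((contDiff_pv hf r).differentiable one_ne_zero _).comp t halong).hasDerivAt
  refine ((HasDerivAt.fun_sum (u := Finset.univ) fun r _ => (hvel r).fun_mul (hpv r)).fun_sub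
    (hasDerivAt_comp_along α (hf.differentiable two_ne_zero _) hfa hq hcon)).congr_deriv ?_
  simp only [mul_sub, Finset.sum_sub_distrib, Finset.sum_add_distrib]
  ring

theorem sum_vel_mul_Bco_eq_zero (hα : ∀ ν, ContDiff ℝ 2 (α ν)) (hαa : ∀ ν, Autonomous (α ν))
    (habar : ∀ ν x, abar α ν x = α ν x) (hq : ContDiff ℝ 2 q) (hcon : Constrained α q)
    (ν : Fin k) (t : ℝ) : ∑ r, vel m k q t r * Bco α q r ν t = 0 := by
  have h := hasDerivAt_energy_along α (hα ν) (hαa ν) hq hcon t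
  rw [show (fun s => energy (α ν) (along m k q s)) = fun _ => 0 from
    funext fun s => sub_eq_zero.mpr (habar ν _)] at h
  rw [← h.unique (hasDerivAt_const t 0)]
  simp only [Bco, mul_sub, Finset.sum_sub_distrib, sum_mul_sum_mul_comm]
  have habar_t : ∀ μ, ∑ r, vel m k q t r * pv (α μ) r (along m k q t) = α μ (along m k q t) :=
    fun μ => habar μ (along m k q t)
  simp only [habar_t]

theorem Voronec.Estar_along_eq (L : PtL m k → ℝ) (hL : ContDiff ℝ 2 (Lstar L α))
    (hLa : Autonomous (Lstar L α)) (hα : ∀ ν, ContDiff ℝ 2 (α ν)) (hαa : ∀ ν, Autonomous (α ν))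
    (habar : ∀ ν x, abar α ν x = α ν x) (hq : ContDiff ℝ 2 q) (hcon : Constrained α q)
    (hV : Voronec L α q) (t₁ t₂ : ℝ) :
    Estar L α (along m k q t₁) = Estar L α (along m k q t₂) := by
  have hderiv : ∀ t, HasDerivAt (fun s => Estar L α (along m k q s)) 0 t := by
    intro t
    refine (hasDerivAt_energy_along α hL hLa hq hcon t).congr_deriv ?_
    have hV' : ∀ r, deriv (fun s => pv (Lstar L α) r (along m k q s)) t
          - pq (Lstar L α) (Fin.castAdd k r) (along m k q t)
        = ∑ ν, pv (α ν) r (along m k q t) * pq (Lstar L α) (Fin.natAdd m ν) (along m k q t)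
          + ∑ ν, Bco α q r ν t * pv L (Fin.natAdd m ν) (Lpt α (along m k q t)) := by
      intro r
      have := hV r t
      rw [Finset.sum_congr rfl fun ν _ =>
        mul_comm (pq (Lstar L α) (Fin.natAdd m ν) (along m k q t)) _] at this
      linarith
    simp only [hV', mul_add, Finset.sum_add_distrib, sum_mul_sum_mul_comm,
      sum_vel_mul_Bco_eq_zero α hα hαa habar hq hcon, zero_mul, Finset.sum_const_zero]
    have habar_t : ∀ ν, ∑ r, vel m k q t r * pv (α ν) r (along m k q t) = α ν (along m k q t) :=
      fun ν => habar ν (along m k q t)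
    simp only [habar_t, add_zero, sub_self]
  exact is_const_of_deriv_eq_zero (fun t => (hderiv t).differentiableAt)
    (fun t => (hderiv t).deriv) t₁ t₂

end Curve

section ConstrainedLagrangian

variable {α : Fin k → Pt m k → ℝ}

theorem contDiff_Lpt {n : WithTop ℕ∞} (hα : ∀ ν, ContDiff ℝ n (α ν)) : ContDiff ℝ n (Lpt α) := by
  refine contDiff_fst.prodMk (ContDiff.prodMk ?_ contDiff_snd.snd)
  refine contDiff_pi.2 fun i => ?_
  induction i using Fin.addCases with
  | left r =>
    simp only [uhat, Fin.append_left]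
    exact (contDiff_apply ℝ ℝ r).comp contDiff_snd.fst
  | right ν =>
    simp only [uhat, Fin.append_right]
    exact hα ν

theorem Autonomous.Lstar {L : PtL m k → ℝ} (hL : Autonomous L) (hα : ∀ ν, Autonomous (α ν)) :
    Autonomous (Lstar L α) := by
  intro Q v a a'
  have huhat : uhat α (Q, v, a) = uhat α (Q, v, a') := by
    simp only [uhat, hα _ Q v a a']
  simp only [NH.Lstar, Lpt, huhat]
  exact hL _ _ _ _

theorem hasDerivAt_Lpt_comp {γ : ℝ → Pt m k} {x : Pt m k} {a : Fin (m+k) → ℝ} {w : Fin m → ℝ}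
    {c s₀ : ℝ} (hγ : HasDerivAt γ (a, w, c) s₀) (hγ₀ : γ s₀ = x)
    (hα : ∀ ν, DifferentiableAt ℝ (α ν) x) :
    HasDerivAt (fun s => Lpt α (γ s))
      (a, Fin.append w fun ν => fderiv ℝ (α ν) x (a, w, c), c) s₀ := by
  have hq : HasDerivAt (fun s => (γ s).1) a s₀ :=
    (hasFDerivAt_fst (p := γ s₀)).comp_hasDerivAt s₀ hγ
  have hvt : HasDerivAt (fun s => (γ s).2) (w, c) s₀ :=
    (hasFDerivAt_snd (p := γ s₀)).comp_hasDerivAt s₀ hγ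
  have hv : HasDerivAt (fun s => (γ s).2.1) w s₀ :=
    (hasFDerivAt_fst (p := (γ s₀).2)).comp_hasDerivAt (f := fun s => (γ s).2) s₀ hvt
  have ht : HasDerivAt (fun s => (γ s).2.2) c s₀ :=
    (hasFDerivAt_snd (p := (γ s₀).2)).comp_hasDerivAt (f := fun s => (γ s).2) s₀ hvt
  have hu : HasDerivAt (fun s => uhat α (γ s)) (Fin.append w fun ν => fderiv ℝ (α ν) x (a, w, c))
      s₀ := by
    refine hasDerivAt_pi.2 fun i => ?_
    induction i using Fin.addCases with
    | left r =>
      simp only [uhat, Fin.append_left]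
      exact hasDerivAt_pi.1 hv r
    | right ν =>
      simp only [uhat, Fin.append_right]
      exact (hα ν).hasFDerivAt.comp_hasDerivAt_of_eq s₀ hγ hγ₀.symm
  exact hq.prodMk (hu.prodMk ht)

theorem Estar_eq_En {L : PtL m k → ℝ} {x : Pt m k} (hL : DifferentiableAt ℝ L (Lpt α x))
    (hα : ∀ ν, ContDiff ℝ 1 (α ν)) (habar : ∀ ν, abar α ν x = α ν x) :
    Estar L α x = En L α x := by
  have hγ₀ : ((x.1, (1 + 0 : ℝ) • x.2.1, x.2.2) : Pt m k) = x := by simp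
  have hLs : DifferentiableAt ℝ (Lstar L α) x :=
    hL.comp x ((contDiff_Lpt hα).differentiable one_ne_zero x)
  have h₁ := hLs.hasFDerivAt.comp_hasDerivAt_of_eq 0 (hasDerivAt_smul_vel x) hγ₀.symm
  have h₂ := hL.hasFDerivAt.comp_hasDerivAt_of_eq 0
    (hasDerivAt_Lpt_comp (hasDerivAt_smul_vel x) hγ₀ fun ν => (hα ν).differentiable one_ne_zero x)
    (by rw [hγ₀])
  have hαbar : ∀ ν, fderiv ℝ (α ν) x (0, x.2.1, 0) = α ν x := fun ν => by
    simpa [fderiv_apply_eq_sum, abar] using habar ν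
  have key := h₁.unique h₂
  simp only [fderiv_apply_eq_sum, hαbar, Pi.zero_apply, zero_mul, Finset.sum_const_zero,
    zero_add, add_zero] at key
  simp only [Estar, En, key]
  rfl

end ConstrainedLagrangian

section QuadraticLagrangian

theorem quadratic_form_append {G : Fin (m+k) → Fin (m+k) → ℝ} (hG : ∀ i j, G i j = G j i)
    (v : Fin m → ℝ) (w : Fin k → ℝ) :
    (1/2) * ∑ i, ∑ j, G i j * Fin.append v w i * Fin.append v w j
      = (1/2) * ∑ r, ∑ s, G (Fin.castAdd k r) (Fin.castAdd k s) * v r * v s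
        + (1/2) * ∑ ν, ∑ μ, G (Fin.natAdd m ν) (Fin.natAdd m μ) * w ν * w μ
        + ∑ r, ∑ ν, G (Fin.castAdd k r) (Fin.natAdd m ν) * v r * w ν := by
  have hcross : ∑ ν, ∑ r, G (Fin.natAdd m ν) (Fin.castAdd k r) * w ν * v r
      = ∑ r, ∑ ν, G (Fin.castAdd k r) (Fin.natAdd m ν) * v r * w ν := by
    rw [Finset.sum_comm]
    exact Finset.sum_congr rfl fun r _ => Finset.sum_congr rfl fun ν _ => by rw [hG]; ring
  simp only [Fin.sum_univ_add, Fin.append_left, Fin.append_right, Finset.sum_add_distrib, hcross]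
  ring

def IsQuadraticLagrangian (g : Fin (m+k) → Fin (m+k) → (Fin (m+k) → ℝ) → ℝ)
    (b : Fin (m+k) → (Fin (m+k) → ℝ) → ℝ) (c U : (Fin (m+k) → ℝ) → ℝ) (L : PtL m k → ℝ) : Prop :=
  ∀ x : PtL m k,
    L x = (1/2) * ∑ i, ∑ j, g i j x.1 * x.2.1 i * x.2.1 j + ∑ i, b i x.1 * x.2.1 i + c x.1 + U x.1

variable {g : Fin (m+k) → Fin (m+k) → (Fin (m+k) → ℝ) → ℝ} {b : Fin (m+k) → (Fin (m+k) → ℝ) → ℝ}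
  {c U : (Fin (m+k) → ℝ) → ℝ} {L : PtL m k → ℝ}

theorem contDiff_of_quadratic {n : WithTop ℕ∞} (hg : ∀ i j, ContDiff ℝ n (g i j))
    (hb : ∀ i, ContDiff ℝ n (b i)) (hc : ContDiff ℝ n c) (hU : ContDiff ℝ n U)
    (hLdef : IsQuadraticLagrangian g b c U L) :
    ContDiff ℝ n L := by
  rw [funext hLdef]
  have hu : ∀ i, ContDiff ℝ n fun x : PtL m k => x.2.1 i := fun i =>
    (contDiff_apply ℝ ℝ i).comp contDiff_snd.fst
  have hq : ContDiff ℝ n fun x : PtL m k => x.1 := contDiff_fst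
  refine (((contDiff_const.mul ?_).add ?_).add (hc.comp hq)).add (hU.comp hq)
  · exact ContDiff.sum fun i _ => ContDiff.sum fun j _ => (((hg i j).comp hq).mul (hu i)).mul (hu j)
  · exact ContDiff.sum fun i _ => ((hb i).comp hq).mul (hu i)

theorem sum_mul_pv_of_quadratic {y : PtL m k} (hL : DifferentiableAt ℝ L y)
    (hLdef : IsQuadraticLagrangian g b c U L) :
    ∑ i, y.2.1 i * pv L i y
      = ∑ i, ∑ j, g i j y.1 * y.2.1 i * y.2.1 j + ∑ i, b i y.1 * y.2.1 i := by
  set T₂ := (1/2) * ∑ i, ∑ j, g i j y.1 * y.2.1 i * y.2.1 j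
  set T₁ := ∑ i, b i y.1 * y.2.1 i
  have hscale : (fun s : ℝ => L (y.1, (1 + s) • y.2.1, y.2.2))
      = fun s => (1 + s) ^ 2 * T₂ + (1 + s) * T₁ + (c y.1 + U y.1) := by
    funext s
    rw [hLdef]
    simp only [T₂, T₁, Pi.smul_apply, smul_eq_mul, Finset.mul_sum]
    rw [add_assoc _ (c y.1)]
    congr 2
    · exact Finset.sum_congr rfl fun i _ => Finset.sum_congr rfl fun j _ => by ring
    · exact Finset.sum_congr rfl fun i _ => by ring
  have h₁ : HasDerivAt (fun s : ℝ => L (y.1, (1 + s) • y.2.1, y.2.2)) (fderiv ℝ L y (0, y.2.1, 0))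
      0 := hL.hasFDerivAt.comp_hasDerivAt_of_eq 0 (hasDerivAt_smul_vel y) (by simp)
  have h₂ : HasDerivAt (fun s : ℝ => (1 + s) ^ 2 * T₂ + (1 + s) * T₁ + (c y.1 + U y.1))
      (2 * T₂ + T₁) 0 := by
    have h1s : HasDerivAt (fun s : ℝ => 1 + s) 1 0 := (hasDerivAt_id 0).const_add 1
    simpa using (((h1s.pow 2).mul_const T₂).add (h1s.mul_const T₁)).add_const (c y.1 + U y.1)
  rw [hscale] at h₁
  have key := h₁.unique h₂
  simp only [fderiv_apply_eq_sum, Pi.zero_apply, zero_mul, Finset.sum_const_zero,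
    zero_add, add_zero] at key
  rw [key]
  ring

theorem En_eq_of_quadratic (α : Fin k → Pt m k → ℝ) {x : Pt m k}
    (hL : DifferentiableAt ℝ L (Lpt α x))
    (hLdef : IsQuadraticLagrangian g b c U L) :
    En L α x = (1/2) * ∑ i, ∑ j, g i j x.1 * uhat α x i * uhat α x j - c x.1 - U x.1 := by
  have h := sum_mul_pv_of_quadratic hL hLdef
  simp only [Lpt] at h
  rw [En, Lstar, hLdef]
  simp only [Lpt, h]
  ring

end QuadraticLagrangian

theorem Jacobi_integral_general (m k : ℕ)
    (g : Fin (m+k) → Fin (m+k) → (Fin (m+k) → ℝ) → ℝ)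
    (b : Fin (m+k) → (Fin (m+k) → ℝ) → ℝ)
    (c U : (Fin (m+k) → ℝ) → ℝ)
    (hg : ∀ i j, ContDiff ℝ 2 (g i j)) (hgsym : ∀ i j x, g i j x = g j i x)
    (hb : ∀ i, ContDiff ℝ 2 (b i)) (hc : ContDiff ℝ 2 c) (hU : ContDiff ℝ 2 U)
    (L : PtL m k → ℝ)
    (hLdef : ∀ x : PtL m k,
      L x = (1/2) * ∑ i : Fin (m+k), ∑ j : Fin (m+k), g i j x.1 * x.2.1 i * x.2.1 j
        + ∑ i : Fin (m+k), b i x.1 * x.2.1 i + c x.1 + U x.1)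
    (α : Fin k → Pt m k → ℝ) (hα : ∀ ν, ContDiff ℝ 2 (α ν))
    (hαt : ∀ (ν : Fin k) (x : Fin (m+k) → ℝ) (v : Fin m → ℝ) (t t' : ℝ),
      α ν (x, v, t) = α ν (x, v, t'))
    (habar : ∀ (ν : Fin k) (x : Pt m k), abar α ν x = α ν x)
    (q : ℝ → Fin (m+k) → ℝ) (hq : ContDiff ℝ 2 q)
    (hcon : Constrained α q)
    (hV : Voronec L α q) :
    let J : ℝ → ℝ := fun t =>
      (1/2) * ∑ r : Fin m, ∑ s : Fin m,
          g (Fin.castAdd k r) (Fin.castAdd k s) (q t) * vel m k q t r * vel m k q t s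
      + (1/2) * ∑ ν : Fin k, ∑ μ : Fin k,
          g (Fin.natAdd m ν) (Fin.natAdd m μ) (q t) * α ν (along m k q t) * α μ (along m k q t)
      + ∑ r : Fin m, ∑ ν : Fin k,
          g (Fin.castAdd k r) (Fin.natAdd m ν) (q t) * vel m k q t r * α ν (along m k q t)
      - U (q t) - c (q t)
    ∀ t₁ t₂ : ℝ, J t₁ = J t₂ := by
  intro J t₁ t₂
  have hL : ContDiff ℝ 2 L := contDiff_of_quadratic hg hb hc hU hLdef
  have hLa : Autonomous L := fun Q u a a' => by rw [hLdef, hLdef]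
  have hJ : ∀ t, J t = Estar L α (along m k q t) := fun t => by
    have hdiff := hL.differentiable two_ne_zero (Lpt α (along m k q t))
    have huhat : uhat α (along m k q t) = Fin.append (vel m k q t) fun ν => α ν (along m k q t) :=
      rfl
    rw [Estar_eq_En hdiff (fun ν => (hα ν).of_le one_le_two) fun ν => habar ν _,
      En_eq_of_quadratic α hdiff hLdef, huhat, quadratic_form_append fun i j => hgsym i j _]
    simp only [J, along]
    ring
  rw [hJ, hJ]
  exact hV.Estar_along_eq α L (hL.comp (contDiff_Lpt hα)) (hLa.Lstar hαt) hα hαt habar hq hcon t₁ t₂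

theorem Jacobi_integral (m k : ℕ) (hm : 0 < m) (hk : 0 < k)
    (g : Fin (m+k) → Fin (m+k) → (Fin (m+k) → ℝ) → ℝ)
    (b : Fin (m+k) → (Fin (m+k) → ℝ) → ℝ)
    (c U : (Fin (m+k) → ℝ) → ℝ)
    (hg : ∀ i j, ContDiff ℝ 2 (g i j)) (hgsym : ∀ i j x, g i j x = g j i x)
    (hb : ∀ i, ContDiff ℝ 2 (b i)) (hc : ContDiff ℝ 2 c) (hU : ContDiff ℝ 2 U)
    (L : PtL m k → ℝ)
    (hLdef : ∀ x : PtL m k,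
      L x = (1/2) * ∑ i : Fin (m+k), ∑ j : Fin (m+k), g i j x.1 * x.2.1 i * x.2.1 j
        + ∑ i : Fin (m+k), b i x.1 * x.2.1 i + c x.1 + U x.1)
    (α : Fin k → Pt m k → ℝ) (hα : ∀ ν, ContDiff ℝ 2 (α ν))
    (hαt : ∀ (ν : Fin k) (x : Fin (m+k) → ℝ) (v : Fin m → ℝ) (t t' : ℝ),
      α ν (x, v, t) = α ν (x, v, t'))
    (habar : ∀ (ν : Fin k) (x : Pt m k), abar α ν x = α ν x)
    (q : ℝ → Fin (m+k) → ℝ) (hq : ContDiff ℝ 2 q)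
    (hcon : Constrained α q)
    (hV : Voronec L α q) :
    let J : ℝ → ℝ := fun t =>
      (1/2) * ∑ r : Fin m, ∑ s : Fin m,
          g (Fin.castAdd k r) (Fin.castAdd k s) (q t) * vel m k q t r * vel m k q t s
      + (1/2) * ∑ ν : Fin k, ∑ μ : Fin k,
          g (Fin.natAdd m ν) (Fin.natAdd m μ) (q t) * α ν (along m k q t) * α μ (along m k q t)
      + ∑ r : Fin m, ∑ ν : Fin k,
          g (Fin.castAdd k r) (Fin.natAdd m ν) (q t) * vel m k q t r * α ν (along m k q t)
      - U (q t) - c (q t)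
    ∀ t₁ t₂ : ℝ, J t₁ = J t₂ :=
  Jacobi_integral_general m k g b c U hg hgsym hb hc hU L hLdef α hα hαt habar q hq hcon hV

end NH
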